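/- arXiv:2502.14346 — 5 statements merged into one kernel-verified Lean document; each statement's English description precedes it below -/
import Mathlib

section
/- Let R be a field, G a group, J a subgroup of G, and λ a simple R[J]-module. Assume: (a) the canonical algebra homomorphism End_{R[J]}(λ) → End_{R[G]}(ind_J^G λ), sending an endomorphism ι of λ to the induced endomorphism id_{R[G]} ⊗ ι of ind_J^G λ, is surjective; and (b) for every R[G]-submodule π of ind_J^G λ, if λ is isomorphic to a quotient of the restriction π|_J, then λ is isomorphic to an R[J]-submodule of π|_J. Then ind_J^G λ is a simple R[G]-module. -/
open Function

variable {R : Type*} [Field R] {G : Type*} [Group G]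
variable {V : Type*} [AddCommGroup V] [Module R V]

/-- The induced module `ind_J^G λ`, modelled as the space of functions `f : G → V`
with `f (g * j) = σ j⁻¹ (f g)` supported on finitely many left cosets of `J`
(this is the usual model of `R[G] ⊗_{R[J]} V`, with `g ⊗ v` corresponding to the function
supported on `gJ` sending `g * j` to `σ j⁻¹ v`). -/
def indCarrier (J : Subgroup G) (σ : Representation R J V) : Submodule R (G → V) where
  carrier := {f | (∀ (g : G) (j : J), f (g * (j : G)) = σ j⁻¹ (f g)) ∧
      ((QuotientGroup.mk : G → G ⧸ J) '' Function.support f).Finite}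
  add_mem' := by
    rintro f g ⟨hf1, hf2⟩ ⟨hg1, hg2⟩
    refine ⟨fun x j => by simp [hf1, hg1], ?_⟩
    refine (hf2.union hg2).subset ?_
    rw [← Set.image_union]
    exact Set.image_mono (Function.support_add _ _)
  zero_mem' := ⟨fun g j => by simp, by simp⟩
  smul_mem' := by
    rintro c f ⟨hf1, hf2⟩
    refine ⟨fun g j => by simp [hf1], ?_⟩
    exact hf2.subset (Set.image_mono (Function.support_const_smul_subset c f))

/-- The representation of `G` on the induced module `ind_J^G λ`, by left translation:
`(x • f) (g) = f (x⁻¹ * g)`. -/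
def indRep (J : Subgroup G) (σ : Representation R J V) :
    Representation R G (indCarrier J σ) where
  toFun x :=
    { toFun := fun f => ⟨fun g => (f : G → V) (x⁻¹ * g), by
        refine ⟨fun g j => ?_, ?_⟩
        · show (f : G → V) (x⁻¹ * (g * (j : G))) = σ j⁻¹ ((f : G → V) (x⁻¹ * g))
          rw [← mul_assoc]
          exact f.2.1 _ j
        refine ((f.2.2).image (fun c : G ⧸ J => x • c)).subset ?_
        rintro c ⟨g, hg, rfl⟩
        refine ⟨QuotientGroup.mk (x⁻¹ * g), ⟨x⁻¹ * g, hg, rfl⟩, ?_⟩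
        show x • (QuotientGroup.mk (x⁻¹ * g) : G ⧸ J) = QuotientGroup.mk g
        rw [MulAction.Quotient.smul_mk, smul_eq_mul, mul_inv_cancel_left]⟩
      map_add' := fun f g => Subtype.ext (funext fun g' => rfl)
      map_smul' := fun c f => Subtype.ext (funext fun g' => rfl) }
  map_one' := by
    apply LinearMap.ext; intro f
    exact Subtype.ext (funext fun g => by simp)
  map_mul' := fun x y => by
    apply LinearMap.ext; intro f
    exact Subtype.ext (funext fun g => by simp [mul_assoc])


instance (J : Subgroup G) (σ : Representation R J V) :
    AddCommGroup (indRep J σ).asModule := inferInstanceAs (AddCommGroup (indCarrier J σ))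

instance {H : Type*} [Group H] (σ : Representation R H V) :
    AddCommGroup σ.asModule := inferInstanceAs (AddCommGroup V)

/-- The endomorphism of `ind_J^G λ` induced by a `J`-equivariant endomorphism `ι` of `λ`;
this is the canonical algebra homomorphism `End_{R[J]}(λ) → End_{R[G]}(ind_J^G λ)`,
`ι ↦ id ⊗ ι`. -/
def indEnd (J : Subgroup G) (σ : Representation R J V) (ι : V →ₗ[R] V)
    (hι : ∀ (j : J) (v : V), ι (σ j v) = σ j (ι v)) :
    indCarrier J σ →ₗ[R] indCarrier J σ where
  toFun f := ⟨fun g => ι ((f : G → V) g), by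
    refine ⟨fun g j => ?_, ?_⟩
    · show ι ((f : G → V) (g * (j : G))) = σ j⁻¹ (ι ((f : G → V) g))
      rw [f.2.1 g j, hι]
    refine f.2.2.subset (Set.image_mono ?_)
    intro g hg hg0
    exact hg (by show ι ((f : G → V) g) = 0; rw [hg0]; simp)⟩
  map_add' f g := Subtype.ext (funext fun x => by
    show ι ((f : G → V) x + (g : G → V) x) = _
    rw [map_add]; rfl)
  map_smul' c f := Subtype.ext (funext fun x => by
    show ι (c • (f : G → V) x) = _
    rw [map_smul]; rfl)

/-! If `π ≠ 0` is a subrepresentation of `ind_J^G λ`, evaluation at `1` maps `π|_J` onto the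
simple module `λ`, so by (b) there is a `J`-embedding `ψ : λ ↪ π`. Frobenius reciprocity extends
`ψ` to a nonzero `G`-map `Φ : ind_J^G λ → π ⊆ ind_J^G λ`, which by (a) is `id ⊗ ι`; by Schur `ι`
is invertible, so `Φ` is onto and `π` is everything. -/

open Representation

section InducedRepresentation

variable {J : Subgroup G} {σ : Representation R J V}

theorem indCarrier_apply_mul (f : indCarrier J σ) (g : G) (j : J) :
    (f : G → V) (g * j) = σ j⁻¹ ((f : G → V) g) :=
  f.2.1 g j

@[simp]
theorem indRep_apply (x : G) (f : indCarrier J σ) (g : G) :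
    (indRep J σ x f : G → V) g = (f : G → V) (x⁻¹ * g) :=
  rfl

section IndSingle

open Classical in
/-- The vector `1 ⊗ v` of `ind_J^G λ`. -/
noncomputable def indSingle (v : V) : indCarrier J σ where
  val g := if h : g ∈ J then σ ⟨g, h⟩⁻¹ v else 0
  property := by
    refine ⟨fun g j => ?_, ?_⟩
    · dsimp only
      by_cases hg : g ∈ J
      · have hgj : g * (j : G) ∈ J := J.mul_mem hg j.2
        rw [dif_pos hgj, dif_pos hg, show (⟨g * j, hgj⟩ : J) = ⟨g, hg⟩ * j from rfl,
          mul_inv_rev, map_mul, Module.End.mul_apply]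
      · have hgj : g * (j : G) ∉ J := fun h => hg (by simpa using J.mul_mem h (J.inv_mem j.2))
        rw [dif_neg hg, dif_neg hgj, map_zero]
    · refine (Set.finite_singleton (QuotientGroup.mk 1 : G ⧸ J)).subset ?_
      rintro _ ⟨g, hg, rfl⟩
      have hgJ : g ∈ J := by_contra fun h => hg (dif_neg h)
      exact QuotientGroup.eq.2 (by simpa using J.inv_mem hgJ)

theorem indSingle_apply_of_mem (v : V) {g : G} (hg : g ∈ J) :
    (indSingle v : indCarrier J σ).1 g = σ ⟨g, hg⟩⁻¹ v :=
  dif_pos hg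

theorem indSingle_apply_of_notMem (v : V) {g : G} (hg : g ∉ J) :
    (indSingle v : indCarrier J σ).1 g = 0 :=
  dif_neg hg

theorem indSingle_apply_one (v : V) : (indSingle v : indCarrier J σ).1 1 = v := by
  rw [indSingle_apply_of_mem v J.one_mem, show (⟨1, J.one_mem⟩ : J) = 1 from rfl, inv_one,
    map_one, Module.End.one_apply]

theorem indSingle_ne_zero {v : V} (hv : v ≠ 0) : (indSingle v : indCarrier J σ) ≠ 0 :=
  fun h => hv (by simpa [indSingle_apply_one] using congr_fun (congrArg Subtype.val h) 1)

end IndSingle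

section IndEval

variable (J σ) in
def indEval : indCarrier J σ →ₗ[R] V where
  toFun f := (f : G → V) 1
  map_add' _ _ := rfl
  map_smul' _ _ := rfl

theorem indEval_apply (f : indCarrier J σ) : indEval J σ f = (f : G → V) 1 :=
  rfl

theorem indEval_indRep (j : J) (f : indCarrier J σ) :
    indEval J σ (indRep J σ j f) = σ j (indEval J σ f) := by
  rw [indEval_apply, indRep_apply, mul_one, ← one_mul (j : G)⁻¹, ← Subgroup.coe_inv,
    indCarrier_apply_mul, inv_inv, indEval_apply]

theorem indEval_surjective_of_ne_bot [σ.IsIrreducible] {π : Subrepresentation (indRep J σ)}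
    (hπ : π ≠ ⊥) : Surjective ((indEval J σ).comp π.toSubmodule.subtype) := by
  let ε := ((indEval J σ).comp π.toSubmodule.subtype).intertwiningMap_of_isIntertwiningMap
    (π.toRepresentation.comp J.subtype) σ fun j f => indEval_indRep j f.1
  refine (IsIrreducible.surjective_or_eq_zero (W := π.toSubmodule) ε).resolve_right
    fun hε => hπ (Subrepresentation.toSubmodule_injective (eq_bot_iff.2 fun f hf => ?_))
  -- `f` vanishes at every `g`, since `f g` is the value at `1` of `g⁻¹ • f ∈ π`.
  refine (Submodule.mem_bot R).2 (Subtype.ext (funext fun g => ?_))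
  have : indEval J σ (indRep J σ g⁻¹ f) = 0 :=
    congrArg (fun φ : IntertwiningMap _ σ => φ ⟨_, π.apply_mem_toSubmodule g⁻¹ hf⟩) hε
  simpa [indEval_apply] using this

end IndEval

section IndLift

variable {W : Type*} [AddCommGroup W] [Module R W] (ρ : Representation R G W)
  (ψ : V →ₗ[R] W) (hψ : ∀ (j : J) (v : V), ψ (σ j v) = ρ j (ψ v))

include hψ in
theorem apply_apply_indCarrier_mul (f : indCarrier J σ) (g : G) (j : J) :
    ρ (g * j) (ψ ((f : G → V) (g * j))) = ρ g (ψ ((f : G → V) g)) := by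
  rw [indCarrier_apply_mul, hψ, map_mul, Module.End.mul_apply, Subgroup.coe_inv, self_inv_apply]

def indLiftTerm (f : indCarrier J σ) (c : G ⧸ J) : W :=
  c.liftOn' (fun g => ρ g (ψ ((f : G → V) g))) fun g g' h => by
    rw [← mul_inv_cancel_left g g', ← apply_apply_indCarrier_mul ρ ψ hψ f g
      ⟨_, QuotientGroup.leftRel_apply.1 h⟩]

theorem indLiftTerm_mk (f : indCarrier J σ) (g : G) :
    indLiftTerm ρ ψ hψ f g = ρ g (ψ ((f : G → V) g)) :=
  rfl

theorem hasFiniteSupport_indLiftTerm (f : indCarrier J σ) :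
    (indLiftTerm ρ ψ hψ f).HasFiniteSupport := by
  refine f.2.2.subset fun c hc => ?_
  induction c using QuotientGroup.induction_on with | H g => ?_
  refine ⟨g, fun h => hc ?_, rfl⟩
  rw [indLiftTerm_mk, h, map_zero, map_zero]

/-- Frobenius reciprocity: the `G`-map `ind_J^G λ → W`, `g ⊗ v ↦ ρ g (ψ v)`. -/
noncomputable def indLift : indCarrier J σ →ₗ[R] W where
  toFun f := ∑ᶠ c, indLiftTerm ρ ψ hψ f c
  map_add' f f' := by
    rw [← finsum_add_distrib (hasFiniteSupport_indLiftTerm ρ ψ hψ f)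
      (hasFiniteSupport_indLiftTerm ρ ψ hψ f')]
    refine finsum_congr fun c => ?_
    induction c using QuotientGroup.induction_on with | H g => ?_
    simp only [indLiftTerm_mk, Submodule.coe_add, Pi.add_apply, map_add]
  map_smul' r f := by
    rw [RingHom.id_apply, smul_finsum' r (hasFiniteSupport_indLiftTerm ρ ψ hψ f)]
    refine finsum_congr fun c => ?_
    induction c using QuotientGroup.induction_on with | H g => ?_
    simp only [indLiftTerm_mk, Submodule.coe_smul, Pi.smul_apply, map_smul]

theorem indLift_apply (f : indCarrier J σ) :
    indLift ρ ψ hψ f = ∑ᶠ c, indLiftTerm ρ ψ hψ f c :=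
  rfl

theorem indLift_indRep (x : G) (f : indCarrier J σ) :
    indLift ρ ψ hψ (indRep J σ x f) = ρ x (indLift ρ ψ hψ f) := by
  rw [indLift_apply, indLift_apply, map_finsum _ (hasFiniteSupport_indLiftTerm ρ ψ hψ f),
    ← finsum_comp_equiv (MulAction.toPerm x : Equiv.Perm (G ⧸ J))]
  refine finsum_congr fun c => ?_
  induction c using QuotientGroup.induction_on with | H g => ?_
  simp only [MulAction.toPerm_apply, MulAction.Quotient.smul_mk, smul_eq_mul, indLiftTerm_mk,
    indRep_apply, inv_mul_cancel_left, map_mul, Module.End.mul_apply]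

theorem indLift_indSingle (v : V) : indLift ρ ψ hψ (indSingle v) = ψ v := by
  rw [indLift_apply, finsum_eq_single _ (QuotientGroup.mk 1), indLiftTerm_mk,
    indSingle_apply_one, map_one, Module.End.one_apply]
  intro c hc
  induction c using QuotientGroup.induction_on with | H g => ?_
  have hg : g ∉ J := fun hg => hc (QuotientGroup.eq.2 (by simpa using J.inv_mem hg))
  rw [indLiftTerm_mk, indSingle_apply_of_notMem v hg, map_zero, map_zero]

theorem indLift_mem {p : Subrepresentation ρ} (hψp : ∀ v, ψ v ∈ p) (f : indCarrier J σ) :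
    indLift ρ ψ hψ f ∈ p :=
  finsum_induction (· ∈ p) p.toSubmodule.zero_mem (fun _ _ => p.toSubmodule.add_mem) fun c => by
    induction c using QuotientGroup.induction_on with
    | H g => exact p.apply_mem_toSubmodule g (hψp _)

end IndLift

theorem indEnd_surjective {ι : V →ₗ[R] V} (hι : ∀ (j : J) (v : V), ι (σ j v) = σ j (ι v))
    (hbij : Bijective ι) : Surjective (indEnd J σ ι hι) := by
  let e := LinearEquiv.ofBijective ι hbij
  have he : ∀ (j : J) (v : V), e.symm (σ j v) = σ j (e.symm v) := fun j v =>
    e.injective (by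
      rw [e.apply_symm_apply]
      change _ = ι _
      rw [hι]
      exact congrArg (σ j) (e.apply_symm_apply v).symm)
  exact fun f => ⟨indEnd J σ e.symm he f, Subtype.ext (funext fun g => e.apply_symm_apply _)⟩

theorem indEnd_surjective_of_ne_zero [σ.IsIrreducible] {ι : V →ₗ[R] V}
    (hι : ∀ (j : J) (v : V), ι (σ j v) = σ j (ι v)) (hne : indEnd J σ ι hι ≠ 0) :
    Surjective (indEnd J σ ι hι) := by
  refine indEnd_surjective hι ((IsIrreducible.bijective_or_eq_zero
    (ι.intertwiningMap_of_isIntertwiningMap σ σ hι)).resolve_right fun h => hne ?_)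
  ext f g
  exact congrArg (fun φ : IntertwiningMap σ σ => φ ((f : G → V) g)) h

end InducedRepresentation

/-- Criterion for irreducibility of an induced representation:
let `R` be a field, `G` a group, `J` a subgroup of `G` and `λ` a simple `R[J]`-module
(given as a representation `σ` of `J` on `V`).  Assume

(a) the canonical algebra homomorphism `End_{R[J]}(λ) → End_{R[G]}(ind_J^G λ)`,
`ι ↦ id ⊗ ι`, is surjective, i.e. every `G`-equivariant endomorphism of `ind_J^G λ` is
induced by a `J`-equivariant endomorphism of `λ`; and

(b) for every `R[G]`-submodule `π` of `ind_J^G λ`, if `λ` is isomorphic to a quotient of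
`π|_J` then `λ` is isomorphic to an `R[J]`-submodule of `π|_J`.

Then `ind_J^G λ` is a simple `R[G]`-module. -/
theorem stmt_0 (J : Subgroup G) (σ : Representation R J V)
    (hsimple : IsSimpleModule (MonoidAlgebra R J) σ.asModule)
    (ha : ∀ Φ : indCarrier J σ →ₗ[R] indCarrier J σ,
      (∀ (x : G) (f : indCarrier J σ), Φ (indRep J σ x f) = indRep J σ x (Φ f)) →
      ∃ (ι : V →ₗ[R] V) (hι : ∀ (j : J) (v : V), ι (σ j v) = σ j (ι v)),
        Φ = indEnd J σ ι hι)
    (hb : ∀ (π : Submodule R (indCarrier J σ))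
      (hπ : ∀ (x : G) (f : indCarrier J σ), f ∈ π → indRep J σ x f ∈ π),
      (∃ φ : π →ₗ[R] V, Function.Surjective φ ∧
        ∀ (j : J) (f : indCarrier J σ) (hf : f ∈ π),
          φ ⟨indRep J σ (j : G) f, hπ (j : G) f hf⟩ = σ j (φ ⟨f, hf⟩)) →
      (∃ ψ : V →ₗ[R] π, Function.Injective ψ ∧
        ∀ (j : J) (v : V),
          (↑(ψ (σ j v)) : indCarrier J σ) = indRep J σ (j : G) ↑(ψ v))) :
    IsSimpleModule (MonoidAlgebra R G) (indRep J σ).asModule := by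
  have : σ.IsIrreducible := (irreducible_iff_isSimpleModule_asModule σ).2 hsimple
  have : Nontrivial V := IsSimpleModule.nontrivial (MonoidAlgebra R J) σ.asModule
  obtain ⟨v, hv⟩ := exists_ne (0 : V)
  have : Nontrivial (indCarrier J σ) := ⟨⟨_, 0, indSingle_ne_zero hv⟩⟩
  refine (irreducible_iff_isSimpleModule_asModule (indRep J σ)).1
    { exists_pair_ne := ⟨⊥, ⊤, fun h => bot_ne_top (congrArg Subrepresentation.toSubmodule h)⟩
      eq_bot_or_eq_top := fun π => or_iff_not_imp_left.2 fun hπ => ?_ }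
  obtain ⟨ψ, hψinj, hψ⟩ := hb π.toSubmodule (fun x _ hf => π.apply_mem_toSubmodule x hf)
    ⟨_, indEval_surjective_of_ne_bot hπ, fun j f _ => indEval_indRep j f⟩
  obtain ⟨ι, hι, hΦ⟩ := ha (indLift (indRep J σ) (π.toSubmodule.subtype ∘ₗ ψ) hψ)
    (indLift_indRep _ _ hψ)
  have hne : indEnd J σ ι hι ≠ 0 := fun h => hv <| hψinj <| by
    have hΦv := indLift_indSingle (indRep J σ) (π.toSubmodule.subtype ∘ₗ ψ) hψ v
    rw [hΦ, h, LinearMap.zero_apply] at hΦv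
    exact (map_zero ψ).symm ▸ Subtype.ext hΦv.symm
  refine Subrepresentation.toSubmodule_injective (eq_top_iff.2 fun f _ => ?_)
  obtain ⟨f', rfl⟩ := indEnd_surjective_of_ne_zero hι hne f
  exact hΦ ▸ indLift_mem _ _ hψ (fun v => (ψ v).2) f'
end

section
/- Let R be a field, G a group, J a subgroup of G, λ a simple R[J]-module, and J¹ a finite subgroup of J whose order is invertible in R. Assume that the restriction λ|_{J¹} is a simple R[J¹]-module and that the intertwining set of λ|_{J¹} in G equals J, i.e. for g ∈ G one has Hom_{R[J¹ ∩ gJ¹g⁻¹]}(ᵍ(λ|_{J¹}), λ|_{J¹ ∩ gJ¹g⁻¹}) ≠ 0 if and only if g ∈ J. Then ind_J^G λ is a simple R[G]-module. -/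
open Function

variable {R : Type*} [Field R] {G : Type*} [Group G]
variable {V : Type*} [AddCommGroup V] [Module R V]

/-!
Let `W` be a nonzero subrepresentation of `ind_J^G λ`. Evaluation at `1` is `J`-equivariant, so by
simplicity of `λ` it maps `W` onto `λ`; averaging a linear section over the finite group `J¹`
gives a `J¹`-equivariant section `s : λ → W`. For `h ∉ J`, the map `v ↦ (s v)(h)` intertwines the
conjugate of `λ|_{J¹}` by `h⁻¹` with `λ`, so it vanishes by the intertwining hypothesis. Thus
`s v` is the function supported on `J` with value `v` at `1`, so `W` contains every function
supported on `J`, and the `G`-translates of these span `ind_J^G λ`.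
-/

theorem Representation.exists_equivariant_section {H M : Type*} [Group H] [Finite H]
    [AddCommGroup M] [Module R M] (hH : (Nat.card H : R) ≠ 0)
    {ρ : Representation R H M} {τ : Representation R H V} (p : M →ₗ[R] V)
    (hp : ∀ h m, p (ρ h m) = τ h (p m)) (W : Submodule R M) (hW : ∀ h, ∀ m ∈ W, ρ h m ∈ W)
    (hWp : W.map p = ⊤) :
    ∃ s : V →ₗ[R] M, (∀ v, s v ∈ W) ∧ (∀ v, p (s v) = v) ∧ ∀ h v, s (τ h v) = ρ h (s v) := by
  have : Fintype H := Fintype.ofFinite H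
  obtain ⟨s₁, hs₁⟩ := (p.domRestrict W).exists_rightInverse_of_surjective
    (by rwa [LinearMap.range_domRestrict])
  have hps₁ (v : V) : p (s₁ v) = v := LinearMap.congr_fun hs₁ v
  let s : V →ₗ[R] M := (Nat.card H : R)⁻¹ • ∑ h : H, ρ h ∘ₗ W.subtype ∘ₗ s₁ ∘ₗ τ h⁻¹
  have hs (v : V) : s v = (Nat.card H : R)⁻¹ • ∑ h : H, ρ h (s₁ (τ h⁻¹ v)) := by
    simp [s]
  refine ⟨s, fun v => ?_, fun v => ?_, fun h v => ?_⟩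
  · rw [hs]
    exact W.smul_mem _ (W.sum_mem fun h _ => hW h _ (s₁ _).2)
  · have hterm (h : H) : p (ρ h (s₁ (τ h⁻¹ v))) = v := by
      rw [hp, hps₁, ← Module.End.mul_apply, ← map_mul, mul_inv_cancel, map_one,
        Module.End.one_apply]
    rw [hs, map_smul, map_sum, Finset.sum_congr rfl fun h _ => hterm h, Finset.sum_const,
      Finset.card_univ, ← Nat.card_eq_fintype_card, ← Nat.cast_smul_eq_nsmul R, smul_smul,
      inv_mul_cancel₀ hH, one_smul]
  · rw [hs, hs, map_smul, map_sum]
    congr 1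
    refine Fintype.sum_equiv (Equiv.mulLeft h⁻¹) _ _ fun x => ?_
    simp [← Module.End.mul_apply, ← map_mul]

namespace indCarrier

variable {J : Subgroup G} {σ : Representation R J V}

theorem apply_mul (f : indCarrier J σ) (g : G) (j : J) :
    (f : G → V) (g * j) = σ j⁻¹ ((f : G → V) g) :=
  f.2.1 g j

theorem indRep_apply (x : G) (f : indCarrier J σ) (g : G) :
    (indRep J σ x f : G → V) g = (f : G → V) (x⁻¹ * g) :=
  rfl

theorem indRep_apply_one (j : J) (f : indCarrier J σ) :
    (indRep J σ j f : G → V) 1 = σ j ((f : G → V) 1) := by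
  rw [indRep_apply, mul_one, ← one_mul (j⁻¹ : G), ← Subgroup.coe_inv, apply_mul, inv_inv]

variable (J σ) in
def eval (g : G) : indCarrier J σ →ₗ[R] V :=
  (LinearMap.proj g).comp (indCarrier J σ).subtype

theorem eval_apply (g : G) (f : indCarrier J σ) : eval J σ g f = (f : G → V) g :=
  rfl

theorem ext_of_support_subset {f₁ f₂ : indCarrier J σ} (h₁ : support (f₁ : G → V) ⊆ J)
    (h₂ : support (f₂ : G → V) ⊆ J) (h : (f₁ : G → V) 1 = (f₂ : G → V) 1) : f₁ = f₂ := by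
  ext g
  by_cases hg : g ∈ J
  · rw [← one_mul g, ← Subgroup.coe_mk J g hg, apply_mul, apply_mul, h]
  · rw [notMem_support.1 fun hg' => hg (h₁ hg'), notMem_support.1 fun hg' => hg (h₂ hg')]

open scoped Classical in
variable (J σ) in
/-- The function supported on `J` corresponding to `1 ⊗ v`. -/
noncomputable def oneTmul (v : V) : indCarrier J σ :=
  ⟨fun g => if hg : g ∈ J then σ ⟨g, hg⟩⁻¹ v else 0, by
    refine ⟨fun g j => ?_, (Set.finite_singleton ((1 : G) : G ⧸ J)).subset ?_⟩
    · dsimp only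
      by_cases hg : g ∈ J
      · rw [dif_pos (J.mul_mem hg j.2), dif_pos hg, ← Module.End.mul_apply, ← map_mul,
          ← mul_inv_rev]
        rfl
      · rw [dif_neg (mt (J.mul_mem_cancel_right j.2).1 hg), dif_neg hg, map_zero]
    · rintro _ ⟨g, hg, rfl⟩
      refine QuotientGroup.eq.2 (by simpa using J.inv_mem (by_contra fun hgJ => hg (dif_neg hgJ)))⟩

theorem oneTmul_apply_one (v : V) : (oneTmul J σ v : G → V) 1 = v := by
  simp only [oneTmul, dif_pos J.one_mem]
  rw [show (⟨1, J.one_mem⟩ : J) = 1 from rfl, inv_one, map_one, Module.End.one_apply]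

instance [Nontrivial V] : Nontrivial (indCarrier J σ) := by
  obtain ⟨v, hv⟩ := exists_ne (0 : V)
  exact ⟨oneTmul J σ v, 0, fun h =>
    hv ((oneTmul_apply_one v).symm.trans ((congrArg (eval J σ 1) h).trans (map_zero _)))⟩

open scoped Classical in
noncomputable def restrictCoset (f : indCarrier J σ) (c : G ⧸ J) : indCarrier J σ :=
  ⟨fun g => if (g : G ⧸ J) = c then (f : G → V) g else 0, by
    refine ⟨fun g j => ?_, f.2.2.subset (Set.image_mono fun g hg => ?_)⟩
    · have hgj : ((g * j : G) : G ⧸ J) = g := QuotientGroup.eq.2 (by simp)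
      dsimp only
      split_ifs <;> simp_all [apply_mul]
    · contrapose! hg
      simp [notMem_support.1 hg]⟩

theorem restrictCoset_apply (f : indCarrier J σ) (c : G ⧸ J) (g : G)
    [Decidable ((g : G ⧸ J) = c)] :
    (restrictCoset f c : G → V) g = if (g : G ⧸ J) = c then (f : G → V) g else 0 := by
  simp only [restrictCoset]; congr

theorem mem_span_range_restrictCoset (f : indCarrier J σ) :
    f ∈ Submodule.span R (Set.range (restrictCoset f)) := by
  classical
  have hf : f = ∑ c ∈ f.2.2.toFinset, restrictCoset f c := by
    ext g
    rw [Submodule.coe_sum, Finset.sum_apply]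
    simp only [restrictCoset_apply, Finset.sum_ite_eq, Set.Finite.mem_toFinset]
    split_ifs with hg
    · rfl
    · exact notMem_support.1 fun hg' => hg ⟨g, hg', rfl⟩
  have hmem := Submodule.sum_mem (Submodule.span R (Set.range (restrictCoset f)))
    fun c (_ : c ∈ f.2.2.toFinset) => Submodule.subset_span (Set.mem_range_self c)
  rwa [← hf] at hmem

theorem support_indRep_inv_restrictCoset_subset (f : indCarrier J σ) (g : G) :
    support (indRep J σ g⁻¹ (restrictCoset f g) : G → V) ⊆ J := by
  classical
  intro h hh
  rw [mem_support, indRep_apply, inv_inv, restrictCoset_apply, ite_ne_right_iff] at hh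
  simpa using J.inv_mem (QuotientGroup.eq.1 hh.1)

theorem eq_top_of_forall_support_subset_mem (W : Subrepresentation (indRep J σ))
    (hW : ∀ f : indCarrier J σ, support (f : G → V) ⊆ J → f ∈ W) : W = ⊤ := by
  refine eq_top_iff.2 fun f _ => Submodule.span_le.2 ?_ (mem_span_range_restrictCoset f)
  rintro _ ⟨c, rfl⟩
  obtain ⟨g, rfl⟩ := QuotientGroup.mk_surjective c
  have h := W.apply_mem_toSubmodule g (hW _ (support_indRep_inv_restrictCoset_subset f g))
  rwa [← Module.End.mul_apply, ← map_mul, mul_inv_cancel, map_one, Module.End.one_apply] at h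

theorem map_eval_one_eq_top (hσ : σ.IsIrreducible) {W : Subrepresentation (indRep J σ)}
    (hW : W ≠ ⊥) : W.toSubmodule.map (eval J σ 1) = ⊤ := by
  let U : Subrepresentation σ := ⟨W.toSubmodule.map (eval J σ 1), by
    rintro j _ ⟨f, hf, rfl⟩
    exact ⟨indRep J σ j f, W.apply_mem_toSubmodule j hf, indRep_apply_one j f⟩⟩
  suffices U ≠ ⊥ from
    congrArg Subrepresentation.toSubmodule ((hσ.eq_bot_or_eq_top U).resolve_left this)
  obtain ⟨f, hfW, hf⟩ := (Submodule.ne_bot_iff W.toSubmodule).1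
    (mt (Subrepresentation.toSubmodule_injective (a₂ := ⊥)) hW)
  obtain ⟨g, hg⟩ : ∃ g, (f : G → V) g ≠ 0 := by
    by_contra! h
    exact hf (Subtype.ext (funext h))
  intro hU
  have hmem : (f : G → V) g ∈ U.toSubmodule :=
    ⟨indRep J σ g⁻¹ f, W.apply_mem_toSubmodule _ hfW, by simp [eval_apply, indRep_apply]⟩
  rw [hU] at hmem
  exact hg hmem

theorem support_subset_of_intertwining {J1 : Subgroup G} (hle : J1 ≤ J)
    (hint : ∀ g : G, (∃ f : V →ₗ[R] V, f ≠ 0 ∧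
      ∀ (x : G) (hx : x ∈ J1) (hx' : g⁻¹ * x * g ∈ J1) (v : V),
        f (σ ⟨g⁻¹ * x * g, hle hx'⟩ v) = σ ⟨x, hle hx⟩ (f v)) → g ∈ J)
    {s : V →ₗ[R] indCarrier J σ}
    (hs : ∀ (x : G) (hx : x ∈ J1) (v : V), s (σ ⟨x, hle hx⟩ v) = indRep J σ x (s v)) (v : V) :
    support (s v : G → V) ⊆ J := by
  intro h hh
  -- `v ↦ (s v) h` is a nonzero intertwiner for the conjugate by `h⁻¹`
  suffices h⁻¹ ∈ J by simpa using J.inv_mem this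
  refine hint h⁻¹ ⟨eval J σ h ∘ₗ s, fun h0 => hh (LinearMap.congr_fun h0 v), fun x hx hx' w => ?_⟩
  have hconj : (h⁻¹⁻¹ * x * h⁻¹)⁻¹ * h = h * ((⟨x, hle hx⟩⁻¹ : J) : G) := by
    simp [mul_assoc]
  rw [LinearMap.comp_apply, LinearMap.comp_apply, eval_apply, eval_apply, hs _ hx', indRep_apply,
    hconj, apply_mul, inv_inv]

end indCarrier

open indCarrier in
theorem stmt_3_general (J : Subgroup G) (σ : Representation R J V)
    (hsimple : IsSimpleModule (MonoidAlgebra R J) σ.asModule)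
    (J1 : Subgroup G) (hle : J1 ≤ J) [Finite J1] (hcard : (Nat.card J1 : R) ≠ 0)
    (hint : ∀ g : G,
      (∃ f : V →ₗ[R] V, f ≠ 0 ∧
        ∀ (x : G) (hx : x ∈ J1) (hx' : g⁻¹ * x * g ∈ J1) (v : V),
          f (σ ⟨g⁻¹ * x * g, hle hx'⟩ v) = σ ⟨x, hle hx⟩ (f v)) ↔ g ∈ J) :
    IsSimpleModule (MonoidAlgebra R G) (indRep J σ).asModule := by
  have : Nontrivial V := IsSimpleModule.nontrivial (MonoidAlgebra R J) σ.asModule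
  rw [← Representation.irreducible_iff_isSimpleModule_asModule] at hsimple ⊢
  have : Nontrivial (Subrepresentation (indRep J σ)) :=
    ⟨⊥, ⊤, fun h => bot_ne_top (congrArg Subrepresentation.toSubmodule h)⟩
  refine ⟨fun W => or_iff_not_imp_left.2 fun hW => ?_⟩
  obtain ⟨s, hsW, hs1, hs⟩ := Representation.exists_equivariant_section hcard
    (ρ := (indRep J σ).comp J1.subtype) (τ := σ.comp (Subgroup.inclusion hle)) (eval J σ 1)
    (fun x f => indRep_apply_one (Subgroup.inclusion hle x) f) W.toSubmodule
    (fun x f hf => W.apply_mem_toSubmodule x hf) (map_eval_one_eq_top hsimple hW)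
  have hs_supp (v : V) : support (s v : G → V) ⊆ J :=
    support_subset_of_intertwining hle (fun g => (hint g).1) (fun x hx => hs ⟨x, hx⟩) v
  refine eq_top_of_forall_support_subset_mem W fun f hf => ?_
  rw [ext_of_support_subset hf (hs_supp _) (hs1 _).symm]
  exact hsW _

/-- Criterion for irreducibility of an induced representation:
let `R` be a field, `G` a group, `J` a subgroup of `G`, `λ` a simple `R[J]`-module (given as
a representation `σ` of `J` on `V`), and `J¹` a finite subgroup of `J` whose order is
invertible in `R`.  Assume that the restriction `λ|_{J¹}` is a simple `R[J¹]`-module and that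
the intertwining set of `λ|_{J¹}` in `G` equals `J`: for `g ∈ G` there exists a nonzero
`R[J¹ ∩ gJ¹g⁻¹]`-linear map `ᵍ(λ|_{J¹}) → λ|_{J¹ ∩ gJ¹g⁻¹}` (where `x ∈ J¹ ∩ gJ¹g⁻¹` acts
on `ᵍ(λ|_{J¹})` by `σ (g⁻¹ x g)`) if and only if `g ∈ J`.
Then `ind_J^G λ` is a simple `R[G]`-module. -/
theorem stmt_3 (J : Subgroup G) (σ : Representation R J V)
    (hsimple : IsSimpleModule (MonoidAlgebra R J) σ.asModule)
    (J1 : Subgroup G) (hle : J1 ≤ J) [Finite J1] (hcard : (Nat.card J1 : R) ≠ 0)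
    (hres : IsSimpleModule (MonoidAlgebra R J1)
      (Representation.asModule (σ.comp (Subgroup.inclusion hle))))
    (hint : ∀ g : G,
      (∃ f : V →ₗ[R] V, f ≠ 0 ∧
        ∀ (x : G) (hx : x ∈ J1) (hx' : g⁻¹ * x * g ∈ J1) (v : V),
          f (σ ⟨g⁻¹ * x * g, hle hx'⟩ v) = σ ⟨x, hle hx⟩ (f v)) ↔ g ∈ J) :
    IsSimpleModule (MonoidAlgebra R G) (indRep J σ).asModule :=
  stmt_3_general J σ hsimple J1 hle hcard hint
end

section
/- Let K be a finite field, F a subfield of K, q = |F|, d = [K : F], and r a natural number with gcd(r, d) = 1. The F-linear map φ : K → K defined by φ(t) = t^{q^r} − t has kernel equal to F, and its image equals the kernel of the trace map Tr_{K/F} : K → F. In particular, every element of K whose trace to F is zero is of the form t^{q^r} − t for some t ∈ K. -/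
/-!
The Frobenius `σ : x ↦ x ^ q` generates `Gal(K/F)`, a cyclic group of order `d`; since
`gcd(r, d) = 1`, so does `σ ^ r`, whose fixed field is therefore `F`. Hence `σ ^ r - 1` has
kernel `F` and an image of dimension `d - 1`. That image lies in the kernel of the trace, which is
`Gal(K/F)`-invariant, and the kernel of the surjective trace also has dimension `d - 1`.
-/

open FiniteField Module

section GaloisGenerator

variable {F E : Type*} [Field F] [Field E] [Algebra F E]

theorem IsGalois.mem_bot_iff_fixed_of_zpowers_eq_top [IsGalois F E] [FiniteDimensional F E]
    {τ : Gal(E/F)} (hτ : Subgroup.zpowers τ = ⊤) (x : E) :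
    x ∈ (⊥ : IntermediateField F E) ↔ τ x = x := by
  refine ⟨fun hx ↦ (IsGalois.mem_bot_iff_fixed x).mp hx τ, fun hx ↦ ?_⟩
  have hstab : Subgroup.zpowers τ ≤ MulAction.stabilizer Gal(E/F) x :=
    Subgroup.zpowers_le.mpr hx
  rw [hτ] at hstab
  exact (IsGalois.mem_bot_iff_fixed x).mpr fun g ↦ hstab (Subgroup.mem_top g)

theorem range_algEquiv_sub_id_eq_ker_trace [FiniteDimensional F E] [Algebra.IsSeparable F E]
    (τ : E ≃ₐ[F] E) (hτ : ∀ x, τ x = x → x ∈ Set.range (algebraMap F E)) :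
    LinearMap.range (τ.toLinearMap - LinearMap.id) = LinearMap.ker (Algebra.trace F E) := by
  set φ : E →ₗ[F] E := τ.toLinearMap - LinearMap.id
  have hker : LinearMap.ker φ = Subalgebra.toSubmodule ⊥ := by
    ext x
    simp only [LinearMap.mem_ker, Subalgebra.mem_toSubmodule, φ, LinearMap.sub_apply,
      AlgEquiv.toLinearMap_apply, LinearMap.id_apply, sub_eq_zero]
    exact ⟨fun hx ↦ Algebra.mem_bot.mpr (hτ x hx), fun hx ↦ by
      obtain ⟨c, rfl⟩ := Algebra.mem_bot.mp hx
      exact τ.commutes c⟩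
  have hrange_le : LinearMap.range φ ≤ LinearMap.ker (Algebra.trace F E) := by
    rintro _ ⟨t, rfl⟩
    simp [φ, Algebra.trace_eq_of_algEquiv]
  have hker_finrank : finrank F (LinearMap.ker φ) = 1 := by
    rw [hker]
    exact Subalgebra.finrank_bot
  have hφ := LinearMap.finrank_range_add_finrank_ker φ
  have htrace := LinearMap.finrank_range_add_finrank_ker (Algebra.trace F E)
  rw [LinearMap.range_eq_top.mpr (Algebra.trace_surjective F E), finrank_top,
    finrank_self] at htrace
  exact Submodule.eq_of_le_of_finrank_eq hrange_le (by omega)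

end GaloisGenerator

namespace FiniteField

variable (F K : Type*) [Field F] [Fintype F] [Field K] [Finite K] [Algebra F K]

theorem zpowers_frobeniusAlgEquivOfAlgebraic_pow_eq_top {r : ℕ} (hr : r.Coprime (finrank F K)) :
    Subgroup.zpowers (frobeniusAlgEquivOfAlgebraic F K ^ r) = ⊤ := by
  set σ := frobeniusAlgEquivOfAlgebraic F K
  have hσ : σ ∈ Subgroup.zpowers (σ ^ r) := by
    rwa [mem_zpowers_pow_iff, orderOf_frobeniusAlgEquivOfAlgebraic]
  refine eq_top_iff.mpr fun g _ ↦ ?_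
  obtain ⟨n, rfl⟩ := (bijective_frobeniusAlgEquivOfAlgebraic_pow F K).2 g
  exact Subgroup.pow_mem _ hσ n

theorem frobeniusAlgEquivOfAlgebraic_pow_apply (r : ℕ) (x : K) :
    (frobeniusAlgEquivOfAlgebraic F K ^ r) x = x ^ Fintype.card F ^ r := by
  rw [AlgEquiv.coe_pow, coe_frobeniusAlgEquivOfAlgebraic_iterate]

theorem pow_card_pow_eq_self_iff {r : ℕ} (hr : r.Coprime (finrank F K)) (x : K) :
    x ^ Fintype.card F ^ r = x ↔ x ∈ Set.range (algebraMap F K) := by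
  rw [← frobeniusAlgEquivOfAlgebraic_pow_apply, ← IntermediateField.mem_bot,
    IsGalois.mem_bot_iff_fixed_of_zpowers_eq_top
      (zpowers_frobeniusAlgEquivOfAlgebraic_pow_eq_top F K hr)]

theorem exists_pow_card_pow_sub_eq_iff_trace_eq_zero {r : ℕ} (hr : r.Coprime (finrank F K))
    (y : K) : (∃ t : K, t ^ Fintype.card F ^ r - t = y) ↔ Algebra.trace F K y = 0 := by
  rw [← LinearMap.mem_ker, ← range_algEquiv_sub_id_eq_ker_trace
    (frobeniusAlgEquivOfAlgebraic F K ^ r) fun x hx ↦ ?_]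
  · simp [frobeniusAlgEquivOfAlgebraic_pow_apply]
  · rwa [← pow_card_pow_eq_self_iff F K hr, ← frobeniusAlgEquivOfAlgebraic_pow_apply]

end FiniteField

/-- Let `K` be a finite field, `F` a subfield, `q = |F|`, `d = [K : F]`, and `r` a natural
number with `gcd(r, d) = 1`. The `F`-linear map `φ : K → K`, `φ(t) = t^(q^r) - t`, has kernel
equal to `F` and image equal to the kernel of the trace map `Tr_{K/F} : K → F`; in particular
every element of `K` of trace zero is of the form `t^(q^r) - t`. -/
theorem stmt_11 {K : Type*} [Field K] [Finite K] (F : Subfield K)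
    (q d r : ℕ) (hq : q = Nat.card F) (hd : d = Module.finrank F K)
    (hr : Nat.gcd r d = 1) :
    (∀ t : K, t ^ q ^ r - t = 0 ↔ t ∈ F) ∧
    (∀ y : K, (∃ t : K, t ^ q ^ r - t = y) ↔ Algebra.trace F K y = 0) := by
  have := Fintype.ofFinite F
  rw [Nat.card_eq_fintype_card] at hq
  subst hq hd
  refine ⟨fun t ↦ ?_, FiniteField.exists_pow_card_pow_sub_eq_iff_trace_eq_zero F K hr⟩
  rw [sub_eq_zero, FiniteField.pow_card_pow_eq_self_iff F K hr]
  exact ⟨fun ⟨c, hc⟩ ↦ hc ▸ c.2, fun ht ↦ ⟨⟨t, ht⟩, rfl⟩⟩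
end

section
/- Let K be a finite field, F a subfield of K, q = |F|, and d = [K : F] with d ≥ 2. Let z ∈ Kˣ be an element of order (q^d − 1)/(q − 1) in the multiplicative group Kˣ, and let m be a natural number not divisible by d. Then z^{q^m} ≠ z. -/
/-- If `n` divides `q^m - 1` and `q^d - 1`, it divides `q^(gcd m d) - 1`. -/
lemma aux_dvd_pow_gcd_sub_one (n q m d : ℕ) (hq : 1 ≤ q)
    (h1 : n ∣ q ^ m - 1) (h2 : n ∣ q ^ d - 1) : n ∣ q ^ Nat.gcd m d - 1 := by
  have key : ∀ k : ℕ, n ∣ q ^ k - 1 ↔ ((q : ZMod n)) ^ k = 1 := by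
    intro k
    rw [← Nat.modEq_iff_dvd' (Nat.one_le_pow _ _ hq), ← ZMod.natCast_eq_natCast_iff]
    push_cast
    constructor <;> intro h <;> simpa using h.symm
  rw [key] at h1 h2 ⊢
  exact orderOf_dvd_iff_pow_eq_one.mp
    (Nat.dvd_gcd (orderOf_dvd_of_pow_eq_one h1) (orderOf_dvd_of_pow_eq_one h2))

/-- Let `K` be a finite field, `F` a subfield, `q = |F|`, `d = [K : F]` with `d ≥ 2`.
Let `z ∈ Kˣ` have order `(q^d - 1)/(q - 1)` and let `m` be a natural number not divisible
by `d`. Then `z^(q^m) ≠ z`. -/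
theorem stmt_12 {K : Type*} [Field K] [Finite K] (F : Subfield K)
    (q d m : ℕ) (hq : q = Nat.card F) (hd : d = Module.finrank F K) (h2 : 2 ≤ d)
    (z : Kˣ) (hz : orderOf z = (q ^ d - 1) / (q - 1)) (hm : ¬ d ∣ m) :
    z ^ q ^ m ≠ z := by
  intro h
  have hq2 : 2 ≤ q := by
    rw [hq]
    exact Finite.one_lt_card
  set n := orderOf z with hn
  -- (q-1) * n = q^d - 1
  have hdvd : q - 1 ∣ q ^ d - 1 := by simpa using Nat.sub_dvd_pow_sub_pow q 1 d
  have hmul : n * (q - 1) = q ^ d - 1 := by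
    rw [hz]; exact Nat.div_mul_cancel hdvd
  have hnd : n ∣ q ^ d - 1 := Dvd.intro _ hmul
  -- z^(q^m - 1) = 1
  have hpow : z ^ (q ^ m - 1) = 1 := by
    have h1 : z ^ (q ^ m - 1) * z = 1 * z := by
      rw [← pow_succ, Nat.sub_add_cancel (Nat.one_le_pow _ _ (by omega)), h, one_mul]
    exact mul_right_cancel h1
  have hnm : n ∣ q ^ m - 1 := orderOf_dvd_of_pow_eq_one hpow
  -- gcd
  set g := Nat.gcd m d with hg
  have hng : n ∣ q ^ g - 1 := aux_dvd_pow_gcd_sub_one n q m d (by omega) hnm hnd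
  have hgd : g ∣ d := Nat.gcd_dvd_right m d
  have hgne : g ≠ d := fun hgd' => hm (hgd' ▸ Nat.gcd_dvd_left m d)
  have hgltd : g < d := lt_of_le_of_ne (Nat.le_of_dvd (by omega) hgd) hgne
  have hgpos : 0 < g := Nat.gcd_pos_of_pos_right m (by omega)
  have hnpos : 0 < n := orderOf_pos z
  have hle : n ≤ q ^ g - 1 :=
    Nat.le_of_dvd (by have := Nat.one_lt_pow (by omega) hq2 (n := g); omega) hng
  have hqg : q ^ g ≤ q ^ (d - 1) := Nat.pow_le_pow_right (by omega) (by omega)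
  have hqd : q ^ (d - 1) * q = q ^ d := by
    rw [← pow_succ]; congr 1; omega
  have hA : 2 ≤ q ^ (d - 1) := le_trans hq2 (Nat.le_self_pow (by omega) q)
  -- contradiction via integer arithmetic
  have h1 : (1 : ℕ) ≤ q ^ g := Nat.one_le_pow _ _ (by omega)
  have h2' : (1 : ℕ) ≤ q ^ d := Nat.one_le_pow _ _ (by omega)
  have hz1 : ((n : ℤ)) * ((q : ℤ) - 1) = (q : ℤ) ^ d - 1 := by
    have h' := congrArg (Nat.cast : ℕ → ℤ) hmul
    push_cast [Nat.cast_sub (by omega : 1 ≤ q), Nat.cast_sub h2'] at h'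
    exact h'
  have hz2 : (n : ℤ) ≤ (q : ℤ) ^ g - 1 := by
    have h' := (Nat.cast_le (α := ℤ)).mpr hle
    push_cast [Nat.cast_sub h1] at h'
    exact h'
  have hz3 : ((q : ℤ)) ^ g ≤ (q : ℤ) ^ (d - 1) := by exact_mod_cast hqg
  have hz4 : ((q : ℤ)) ^ (d - 1) * q = (q : ℤ) ^ d := by exact_mod_cast hqd
  have hz5 : (2 : ℤ) ≤ (q : ℤ) ^ (d - 1) := by exact_mod_cast hA
  have hz6 : (2 : ℤ) ≤ (q : ℤ) := by exact_mod_cast hq2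
  nlinarith [hz1, hz2, hz3, hz4, hz5, hz6]
end

section
/- Let A be a (possibly noncommutative) ring with unit, P a two-sided ideal of A, and i an integer with i ≥ 2. Let a ∈ P and b ∈ P^{i−1}, and assume that u = 1 + a and v = 1 + b are units of A. Then the commutator satisfies u v u⁻¹ v⁻¹ − 1 − (a b − b a) ∈ P^{i+1}; that is, (1+a)(1+b)(1+a)⁻¹(1+b)⁻¹ ≡ 1 + ab − ba modulo P^{i+1}. -/
/-- Let `A` be a (possibly noncommutative) ring with unit, `P` a two-sided ideal of `A`
(encoded as an additive `ℤ`-submodule of `A` which is closed under left and right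
multiplication by elements of `A`; its powers `P ^ k` are then the spans of products of `k`
elements of `P`), and `i ≥ 2`. Let `a ∈ P`, `b ∈ P^(i-1)`, and assume `u = 1 + a` and
`v = 1 + b` are units of `A`. Then `u * v * u⁻¹ * v⁻¹ - 1 - (a * b - b * a) ∈ P^(i+1)`,
i.e. `(1+a)(1+b)(1+a)⁻¹(1+b)⁻¹ ≡ 1 + ab - ba` modulo `P^(i+1)`. -/
theorem stmt_13 {A : Type*} [Ring A] (P : Submodule ℤ A)
    (hleft : ∀ (c : A), ∀ x ∈ P, c * x ∈ P) (hright : ∀ (c : A), ∀ x ∈ P, x * c ∈ P)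
    (i : ℕ) (hi : 2 ≤ i) (a b : A) (ha : a ∈ P) (hb : b ∈ P ^ (i - 1))
    (hu : IsUnit (1 + a)) (hv : IsUnit (1 + b)) :
    (1 + a) * (1 + b) * (↑hu.unit⁻¹ : A) * (↑hv.unit⁻¹ : A) - 1 - (a * b - b * a)
      ∈ P ^ (i + 1) := by
  set U : A := (↑hu.unit⁻¹ : A) with hUdef
  set V : A := (↑hv.unit⁻¹ : A) with hVdef
  have h1 : (1 + a) * U = 1 := by exact hu.mul_val_inv
  have h2 : U * (1 + a) = 1 := by exact hu.val_inv_mul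
  have h3 : (1 + b) * V = 1 := by exact hv.mul_val_inv
  have h4 : V * (1 + b) = 1 := by exact hv.val_inv_mul
  -- P^(i-1) ≤ P
  obtain ⟨k, hk⟩ : ∃ k, i - 1 = k + 1 := ⟨i - 2, by omega⟩
  have hPle : P ^ (i - 1) ≤ P := by
    rw [hk, pow_succ]
    exact Submodule.mul_le.mpr (fun m hm n hn => hleft m n hn)
  have hbP : b ∈ P := hPle hb
  -- membership of the commutator pieces
  have hU1 : U - 1 ∈ P := by
    have e : U - 1 = -(U * a) := by rw [← h2]; noncomm_ring
    rw [e]; exact neg_mem (hleft U a ha)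
  have hV1 : V - 1 ∈ P := by
    have e : V - 1 = -(V * b) := by rw [← h4]; noncomm_ring
    rw [e]; exact neg_mem (hleft V b hbP)
  have hUV : U * V - 1 ∈ P := by
    have e : U * V - 1 = (U - 1) * V + (V - 1) := by noncomm_ring
    rw [e]; exact add_mem (hright V _ hU1) hV1
  have hi1 : i - 1 + 1 = i := by omega
  have hab : a * b ∈ P ^ i := by
    rw [← hi1, pow_succ']; exact Submodule.mul_mem_mul ha hb
  have hba : b * a ∈ P ^ i := by
    rw [← hi1, pow_succ]; exact Submodule.mul_mem_mul hb ha
  have hc : a * b - b * a ∈ P ^ i := sub_mem hab hba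
  have e2 : (1 + b) * ((1 + a) * U) * V = 1 := by rw [h1, mul_one, h3]
  have key : (1 + a) * (1 + b) * U * V - 1 - (a * b - b * a)
      = (a * b - b * a) * (U * V - 1) := by
    calc (1 + a) * (1 + b) * U * V - 1 - (a * b - b * a)
        = (1 + b) * ((1 + a) * U) * V + (a * b - b * a) * (U * V) - 1
            - (a * b - b * a) := by noncomm_ring
      _ = 1 + (a * b - b * a) * (U * V) - 1 - (a * b - b * a) := by rw [e2]
      _ = (a * b - b * a) * (U * V - 1) := by noncomm_ring
  rw [key, pow_succ]
  exact Submodule.mul_mem_mul hc hUV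
end
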